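/- Let d, p ∈ ℕ with p ≥ 1, let ω be a smooth time-dependent p-form and γ a smooth time-dependent (p−1)-form on ℝ^d. Define the smooth p-form Ω on ℝ^{1+d} = ℝ × ℝ^d by Ω(t,x)((a₁,w₁),…,(a_p,w_p)) := ω(t,x)(w₁,…,w_p) + Σ_{i=1}^{p} (−1)^{i−1} aᵢ · γ(t,x)(w₁,…,ŵᵢ,…,w_p), i.e. Ω is the pullback of ω plus dt wedge the pullback of γ. Then the exterior derivative of Ω on ℝ^{1+d} (defined by the same alternating-sum-of-directional-derivatives formula, now in all 1+d variables) equals the form corresponding, under the same recipe, to the pair (dω, ∂_tω − dγ); that is, dΩ = (pullback of dω) + dt ∧ (pullback of (∂_tω − dγ)). (This is the space/time splitting d F = d_s B + (d_t B + d_s ⋆E) of the de Rham differential of a flux density F = B + ⋆E.) -/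

import Mathlib

open scoped BigOperators

/-- The spatial model space `ℝ^d`. -/
abbrev Vec (d : ℕ) : Type := Fin d → ℝ

/-- The space of alternating `p`-linear maps `(ℝ^d)^p → ℝ`. -/
abbrev AltForm (d p : ℕ) : Type := AlternatingMap ℝ (Vec d) ℝ (Fin p)

/-- A time-dependent `p`-form on `ℝ^d`: a map `ℝ × ℝ^d → (ℝ^d [⋀^p]→ ℝ)`. -/
abbrev TForm (d p : ℕ) : Type := ℝ × Vec d → AltForm d p

/-- A "raw" time-dependent `p`-form: a point of `ℝ × ℝ^d` together with a `p`-tuple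
of vectors is assigned a number. -/
abbrev RawForm (d p : ℕ) : Type := ℝ × Vec d → (Fin p → Vec d) → ℝ

/-- The raw form underlying a time-dependent `p`-form. -/
def TForm.raw {d p : ℕ} (ω : TForm d p) : RawForm d p := fun q v => ω q v

/-- A time-dependent `p`-form is smooth iff all its evaluations (at `p`-tuples of vectors,
which are linear coordinates on the finite-dimensional space of alternating `p`-linear maps)
are smooth functions of `(t, x)`. -/
def TForm.Smooth {d p : ℕ} (ω : TForm d p) : Prop :=
  ∀ v : Fin p → Vec d, ContDiff ℝ (⊤ : ℕ∞) fun q : ℝ × Vec d => ω q v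

/-- The time derivative `∂ₜω` of a (raw) time-dependent form, evaluation-wise. -/
noncomputable def tder {d p : ℕ} (ω : RawForm d p) : RawForm d p :=
  fun q v => deriv (fun s : ℝ => ω (s, q.2) v) q.1

/-- The spatial exterior derivative `dω` of a (raw) time-dependent `p`-form:
`(dω)(t,x)(v₀,…,v_p) = ∑ i, (-1)^i (D_x ω(t,·)(x) vᵢ)(v₀,…,v̂ᵢ,…,v_p)`. -/
noncomputable def sder {d p : ℕ} (ω : RawForm d p) : RawForm d (p + 1) :=
  fun q v => ∑ i : Fin (p + 1),
    (-1 : ℝ) ^ (i : ℕ) *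
      fderiv ℝ (fun x : Vec d => ω (q.1, x) (v ∘ i.succAbove)) q.2 (v i)

/-- A raw `p`-form on the full spacetime `ℝ^{1+d} = ℝ × ℝ^d`. -/
abbrev FullRawForm (d p : ℕ) : Type := ℝ × Vec d → (Fin p → ℝ × Vec d) → ℝ

/-- The exterior derivative of a (raw) `p`-form on `ℝ^{1+d}`, given by the same
alternating-sum-of-directional-derivatives formula, now in all `1 + d` variables. -/
noncomputable def extDer {d p : ℕ} (Ω : FullRawForm d p) : FullRawForm d (p + 1) :=
  fun y v => ∑ i : Fin (p + 1),
    (-1 : ℝ) ^ (i : ℕ) *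
      fderiv ℝ (fun z : ℝ × Vec d => Ω z (v ∘ i.succAbove)) y (v i)

/-- The `p`-form on `ℝ^{1+d}` associated to a pair consisting of a (raw) `p`-form and a
(raw) `(p-1)`-form on `ℝ^d`: the pullback of the first plus `dt` wedge the pullback of the
second, i.e.
`Ω(t,x)((a₁,w₁),…,(a_p,w_p)) = ω(t,x)(w₁,…,w_p) + ∑ i, (-1)^{i-1} aᵢ · γ(t,x)(w₁,…,ŵᵢ,…,w_p)`
(indices written here starting from `0`). -/
def pairForm {d p : ℕ} (ω : RawForm d (p + 1)) (γ : RawForm d p) : FullRawForm d (p + 1) :=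
  fun y v =>
    ω y (fun i => (v i).2) +
      ∑ i : Fin (p + 1),
        (-1 : ℝ) ^ (i : ℕ) * (v i).1 * γ y (fun j => (v (i.succAbove j)).2)

noncomputable def swapIdx {m : ℕ} (a : Fin (m+2) × Fin (m+1)) : Fin (m+2) × Fin (m+1) :=
  (a.1.succAbove a.2, Classical.choose (Fin.exists_succAbove_eq (Fin.succAbove_ne a.1 a.2).symm))

lemma swapIdx_spec {m : ℕ} (a : Fin (m+2) × Fin (m+1)) :
    (swapIdx a).1.succAbove (swapIdx a).2 = a.1 :=
  Classical.choose_spec (Fin.exists_succAbove_eq (Fin.succAbove_ne a.1 a.2).symm)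

lemma swapIdx_fst {m : ℕ} (a : Fin (m+2) × Fin (m+1)) :
    (swapIdx a).1 = a.1.succAbove a.2 := rfl

lemma swapIdx_invol {m : ℕ} (a : Fin (m+2) × Fin (m+1)) : swapIdx (swapIdx a) = a := by
  have h1 : (swapIdx (swapIdx a)).1 = a.1 := swapIdx_spec a
  have hs := swapIdx_spec (swapIdx a)
  rw [h1, swapIdx_fst a] at hs
  exact Prod.ext h1 (Fin.succAbove_right_injective hs)

lemma succAbove_val' {m : ℕ} (p : Fin (m+1)) (i : Fin m) :
    ((p.succAbove i : Fin (m+1)) : ℕ) = if (i:ℕ) < (p:ℕ) then (i:ℕ) else (i:ℕ)+1 := by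
  rw [Fin.succAbove]
  split_ifs with h h2 h3 <;> simp_all [Fin.lt_def]

lemma sign_odd {m : ℕ} (i j : Fin (m+2)) (k k' : Fin (m+1))
    (h1 : i.succAbove k = j) (h2 : j.succAbove k' = i) :
    ((i:ℕ) + (k:ℕ) + ((j:ℕ) + (k':ℕ))) % 2 = 1 := by
  have e1 := succAbove_val' i k
  have e2 := succAbove_val' j k'
  rw [h1] at e1
  rw [h2] at e2
  have hne : (i:ℕ) ≠ (j:ℕ) := fun h =>
    Fin.succAbove_ne i k (h1.trans (Fin.val_injective h).symm)
  split_ifs at e1 e2 <;> omega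

lemma compl_pair_eq {m : ℕ} (i j : Fin m) : ({i}ᶜ \ {j} : Set (Fin m)) = {j}ᶜ \ {i} := by
  ext x; simp; tauto

lemma succAbove_comp_eq {m : ℕ} (i j : Fin (m+2)) (k k' : Fin (m+1))
    (h1 : i.succAbove k = j) (h2 : j.succAbove k' = i) :
    i.succAbove ∘ k.succAbove = j.succAbove ∘ k'.succAbove := by
  have hmono1 : StrictMono (i.succAbove ∘ k.succAbove) :=
    (Fin.strictMono_succAbove i).comp (Fin.strictMono_succAbove k)
  have hmono2 : StrictMono (j.succAbove ∘ k'.succAbove) :=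
    (Fin.strictMono_succAbove j).comp (Fin.strictMono_succAbove k')
  refine (hmono1.range_inj hmono2).mp ?_
  have him : ∀ (a : Fin (m+2)) (b : Fin (m+1)),
      Set.range (a.succAbove ∘ b.succAbove) = {a}ᶜ \ {a.succAbove b} := by
    intro a b
    rw [Set.range_comp, Fin.range_succAbove, ← Set.image_singleton]
    rw [show ({b}ᶜ : Set (Fin (m+1))) = Set.univ \ {b} by simp [Set.compl_eq_univ_diff]]
    rw [Set.image_diff Fin.succAbove_right_injective, Set.image_univ, Fin.range_succAbove]
  rw [him, him, h1, h2, compl_pair_eq]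

lemma sign_flip {m : ℕ} (i j : Fin (m+2)) (k k' : Fin (m+1))
    (h1 : i.succAbove k = j) (h2 : j.succAbove k' = i) :
    (-1:ℝ)^((j:ℕ)+(k':ℕ)) = -(-1:ℝ)^((i:ℕ)+(k:ℕ)) := by
  have hodd := sign_odd i j k k' h1 h2
  rcases Nat.even_or_odd ((i:ℕ)+(k:ℕ)) with he | ho
  · have h2' : Odd ((j:ℕ)+(k':ℕ)) := by
      rw [Nat.odd_iff]; rw [Nat.even_iff] at he; omega
    rw [he.neg_one_pow, h2'.neg_one_pow]
  · have h2' : Even ((j:ℕ)+(k':ℕ)) := by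
      rw [Nat.even_iff]; rw [Nat.odd_iff] at ho; omega
    rw [ho.neg_one_pow, h2'.neg_one_pow]; norm_num

lemma sum_succAbove_swap {m : ℕ} (F : Fin (m+2) → Fin (m+2) → (Fin m → Fin (m+2)) → ℝ) :
    (∑ i : Fin (m+2), ∑ k : Fin (m+1),
      (-1:ℝ)^((i:ℕ)+(k:ℕ)) * F i (i.succAbove k) (i.succAbove ∘ k.succAbove))
  = -∑ i : Fin (m+2), ∑ k : Fin (m+1),
      (-1:ℝ)^((i:ℕ)+(k:ℕ)) * F (i.succAbove k) i (i.succAbove ∘ k.succAbove) := by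
  rw [eq_neg_iff_add_eq_zero, ← Finset.sum_add_distrib]
  simp only [← Finset.sum_add_distrib, ← mul_add]
  have h0 : ∑ a : Fin (m+2) × Fin (m+1),
      ((-1:ℝ)^((a.1:ℕ)+(a.2:ℕ)) * (F a.1 (a.1.succAbove a.2) (a.1.succAbove ∘ a.2.succAbove)
        + F (a.1.succAbove a.2) a.1 (a.1.succAbove ∘ a.2.succAbove))) = 0 := by
    refine Finset.sum_ninvolution swapIdx ?_ ?_ (fun a => Finset.mem_univ _) swapIdx_invol
    · intro a
      obtain ⟨i, k⟩ := a
      have hfst : (swapIdx (i,k)).1 = i.succAbove k := swapIdx_fst (i,k)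
      have hspec : (swapIdx (i,k)).1.succAbove (swapIdx (i,k)).2 = i := swapIdx_spec (i,k)
      set j := (swapIdx (i,k)).1 with hj
      set k' := (swapIdx (i,k)).2 with hk'
      have hcomp : i.succAbove ∘ k.succAbove = j.succAbove ∘ k'.succAbove :=
        succAbove_comp_eq i j k k' hfst.symm hspec
      have hsgn : (-1:ℝ)^((j:ℕ)+(k':ℕ)) = -(-1:ℝ)^((i:ℕ)+(k:ℕ)) :=
        sign_flip i j k k' hfst.symm hspec
      show (-1:ℝ)^((i:ℕ)+(k:ℕ)) * _ + (-1:ℝ)^((j:ℕ)+(k':ℕ)) * _ = 0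
      rw [hsgn, hspec]
      rw [hfst] at hcomp
      rw [hfst, ← hcomp]
      ring
    · intro a _ h
      have := congrArg Prod.fst h
      rw [swapIdx_fst] at this
      exact Fin.succAbove_ne a.1 a.2 this
  rw [Fintype.sum_prod_type] at h0
  exact h0
lemma fderiv_split {d : ℕ} {g : ℝ × Vec d → ℝ} (hg : ContDiff ℝ (⊤ : ℕ∞) g)
    (y u : ℝ × Vec d) :
    fderiv ℝ g y u =
      u.1 * deriv (fun s : ℝ => g (s, y.2)) y.1 +
        fderiv ℝ (fun x : Vec d => g (y.1, x)) y.2 u.2 := by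
  have hdiff : DifferentiableAt ℝ g y := (hg.differentiable (by norm_num)) y
  have h1 : HasDerivAt (fun s : ℝ => g (s, y.2)) (fderiv ℝ g y (1, 0)) y.1 := by
    have hc : HasDerivAt (fun s : ℝ => ((s, y.2) : ℝ × Vec d)) ((1:ℝ), (0 : Vec d)) y.1 :=
      (hasDerivAt_id y.1).prodMk (hasDerivAt_const _ _)
    exact hdiff.hasFDerivAt.comp_hasDerivAt y.1 hc
  have h2 : HasFDerivAt (fun x : Vec d => g (y.1, x))
      ((fderiv ℝ g y).comp (ContinuousLinearMap.inr ℝ ℝ (Vec d))) y.2 := by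
    have hc : HasFDerivAt (fun x : Vec d => ((y.1, x) : ℝ × Vec d))
        (ContinuousLinearMap.inr ℝ ℝ (Vec d)) y.2 :=
      (hasFDerivAt_const _ _).prodMk (hasFDerivAt_id _)
    exact hdiff.hasFDerivAt.comp y.2 hc
  rw [h1.deriv, h2.fderiv]
  have hu : u = u.1 • ((1:ℝ), (0 : Vec d)) + ((0:ℝ), u.2) := by
    apply Prod.ext <;> simp
  calc fderiv ℝ g y u = fderiv ℝ g y (u.1 • ((1:ℝ), (0:Vec d)) + ((0:ℝ), u.2)) := by rw [← hu]
    _ = u.1 * fderiv ℝ g y (1, 0) +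
        ((fderiv ℝ g y).comp (ContinuousLinearMap.inr ℝ ℝ (Vec d))) u.2 := by
        rw [map_add, map_smul]; rfl

/-- For smooth time-dependent forms `ω` (degree `p ≥ 1`, here `p = n + 1`) and `γ`
(degree `p - 1 = n`) on `ℝ^d`, the exterior derivative on `ℝ^{1+d}` of
`Ω = (pullback of ω) + dt ∧ (pullback of γ)` is the form corresponding, under the same
recipe, to the pair `(dω, ∂ₜω - dγ)`:
`dΩ = (pullback of dω) + dt ∧ (pullback of (∂ₜω - dγ))`.
(The space/time splitting `dF = d_s B + (d_t B + d_s ⋆E)` of the de Rham differential.) -/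
theorem extDer_pairForm (d n : ℕ) (ω : TForm d (n + 1)) (γ : TForm d n)
    (hω : ω.Smooth) (hγ : γ.Smooth) :
    extDer (pairForm ω.raw γ.raw) =
      pairForm (sder ω.raw) (fun q v => tder ω.raw q v - sder γ.raw q v) := by
  funext y v
  simp only [extDer, pairForm, sder, tder, TForm.raw, Function.comp_def]
  have key : ∀ i : Fin (n + 2),
      (fderiv ℝ
          (fun z => (ω z) (fun j => (v (i.succAbove j)).2) +
            ∑ k : Fin (n+1),
              (-1:ℝ)^(k:ℕ) * (v (i.succAbove k)).1 *
                (γ z) (fun j => (v (i.succAbove (k.succAbove j))).2)) y) (v i)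
      = ((v i).1 * deriv (fun s => (ω (s, y.2)) (fun j => (v (i.succAbove j)).2)) y.1
          + (fderiv ℝ (fun x => (ω (y.1, x)) (fun j => (v (i.succAbove j)).2)) y.2) (v i).2)
        + ∑ k : Fin (n+1),
            (-1:ℝ)^(k:ℕ) * (v (i.succAbove k)).1 *
              ((v i).1 * deriv (fun s => (γ (s, y.2)) (fun j => (v (i.succAbove (k.succAbove j))).2)) y.1
                + (fderiv ℝ (fun x => (γ (y.1, x)) (fun j => (v (i.succAbove (k.succAbove j))).2)) y.2) (v i).2) := by
    intro i
    set W : Fin (n+1) → Vec d := fun j => (v (i.succAbove j)).2 with hW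
    have hf : HasFDerivAt (fun z : ℝ × Vec d => (ω z) W)
        (fderiv ℝ (fun z : ℝ × Vec d => (ω z) W) y) y :=
      (((hω W).differentiable (by norm_num)) y).hasFDerivAt
    have hg : ∀ k : Fin (n+1), HasFDerivAt
        (fun z : ℝ × Vec d => (γ z) (fun j => (v (i.succAbove (k.succAbove j))).2))
        (fderiv ℝ (fun z : ℝ × Vec d => (γ z) (fun j => (v (i.succAbove (k.succAbove j))).2)) y) y :=
      fun k => (((hγ _).differentiable (by norm_num)) y).hasFDerivAt
    have hsum : HasFDerivAt
        (fun z : ℝ × Vec d => ∑ k : Fin (n+1),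
          (-1:ℝ)^(k:ℕ) * (v (i.succAbove k)).1 *
            (γ z) (fun j => (v (i.succAbove (k.succAbove j))).2))
        (∑ k : Fin (n+1), ((-1:ℝ)^(k:ℕ) * (v (i.succAbove k)).1) •
          fderiv ℝ (fun z : ℝ × Vec d => (γ z) (fun j => (v (i.succAbove (k.succAbove j))).2)) y) y := by
      refine HasFDerivAt.fun_sum fun k _ => ?_
      simpa [mul_assoc] using (hg k).const_mul ((-1:ℝ)^(k:ℕ) * (v (i.succAbove k)).1)
    have e1 := (hf.fun_add hsum).fderiv
    rw [e1]
    rw [ContinuousLinearMap.add_apply, ContinuousLinearMap.sum_apply]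
    rw [fderiv_split (hω W) y (v i)]
    congr 1
    refine Finset.sum_congr rfl fun k _ => ?_
    rw [ContinuousLinearMap.smul_apply, smul_eq_mul,
      fderiv_split (hγ (fun j => (v (i.succAbove (k.succAbove j))).2)) y (v i), mul_assoc]
  simp only [key]
  simp only [mul_add, Finset.mul_sum, Finset.sum_add_distrib, mul_sub, Finset.sum_sub_distrib]
  have hS1 : (∑ x : Fin (n + 1 + 1), (-1:ℝ) ^ (x:ℕ) *
        ((v x).1 * deriv (fun s => (ω (s, y.2)) fun j => (v (x.succAbove j)).2) y.1))
      = ∑ x : Fin (n + 1 + 1), (-1:ℝ) ^ (x:ℕ) * (v x).1 *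
          deriv (fun s => (ω (s, y.2)) fun j => (v (x.succAbove j)).2) y.1 :=
    Finset.sum_congr rfl fun x _ => by ring
  have h3 : (∑ x : Fin (n + 1 + 1), ∑ k : Fin (n + 1),
      (-1:ℝ) ^ (x:ℕ) * ((-1:ℝ) ^ (k:ℕ) * (v (x.succAbove k)).1 *
        ((v x).1 * deriv (fun s => (γ (s, y.2)) fun j => (v (x.succAbove (k.succAbove j))).2) y.1))) = 0 := by
    have hsw := sum_succAbove_swap (m := n)
      (fun a b g => (v a).1 * (v b).1 * deriv (fun s => (γ (s, y.2)) fun j => (v (g j)).2) y.1)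
    simp only [Function.comp_apply] at hsw
    have e1 : (∑ x : Fin (n + 1 + 1), ∑ k : Fin (n + 1),
        (-1:ℝ) ^ (x:ℕ) * ((-1:ℝ) ^ (k:ℕ) * (v (x.succAbove k)).1 *
          ((v x).1 * deriv (fun s => (γ (s, y.2)) fun j => (v (x.succAbove (k.succAbove j))).2) y.1)))
        = ∑ i : Fin (n + 2), ∑ k : Fin (n + 1),
          (-1:ℝ) ^ ((i:ℕ) + (k:ℕ)) * ((v i).1 * (v (i.succAbove k)).1 *
            deriv (fun s => (γ (s, y.2)) fun j => (v (i.succAbove (k.succAbove j))).2) y.1) :=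
      Finset.sum_congr rfl fun x _ => Finset.sum_congr rfl fun k _ => by rw [pow_add]; ring
    have e2 : (∑ i : Fin (n + 2), ∑ k : Fin (n + 1),
        (-1:ℝ) ^ ((i:ℕ) + (k:ℕ)) * ((v (i.succAbove k)).1 * (v i).1 *
          deriv (fun s => (γ (s, y.2)) fun j => (v (i.succAbove (k.succAbove j))).2) y.1))
        = ∑ i : Fin (n + 2), ∑ k : Fin (n + 1),
          (-1:ℝ) ^ ((i:ℕ) + (k:ℕ)) * ((v i).1 * (v (i.succAbove k)).1 *
            deriv (fun s => (γ (s, y.2)) fun j => (v (i.succAbove (k.succAbove j))).2) y.1) :=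
      Finset.sum_congr rfl fun x _ => Finset.sum_congr rfl fun k _ => by ring
    rw [e1, hsw, e2, ← e1]
    linarith [hsw, e1, e2]
  have h45 : (∑ x : Fin (n + 1 + 1), ∑ k : Fin (n + 1),
      (-1:ℝ) ^ (x:ℕ) * ((-1:ℝ) ^ (k:ℕ) * (v (x.succAbove k)).1 *
        (fderiv ℝ (fun x1 => (γ (y.1, x1)) fun j => (v (x.succAbove (k.succAbove j))).2) y.2) (v x).2))
      = -∑ x : Fin (n + 1 + 1), ∑ k : Fin (n + 1),
        (-1:ℝ) ^ (x:ℕ) * (v x).1 *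
          ((-1:ℝ) ^ (k:ℕ) *
            (fderiv ℝ (fun x1 => (γ (y.1, x1)) fun j => (v (x.succAbove (k.succAbove j))).2) y.2)
              (v (x.succAbove k)).2) := by
    have hsw := sum_succAbove_swap (m := n)
      (fun a b g => (v b).1 *
        (fderiv ℝ (fun x1 => (γ (y.1, x1)) fun j => (v (g j)).2) y.2) (v a).2)
    simp only [Function.comp_apply] at hsw
    have e1 : (∑ x : Fin (n + 1 + 1), ∑ k : Fin (n + 1),
        (-1:ℝ) ^ (x:ℕ) * ((-1:ℝ) ^ (k:ℕ) * (v (x.succAbove k)).1 *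
          (fderiv ℝ (fun x1 => (γ (y.1, x1)) fun j => (v (x.succAbove (k.succAbove j))).2) y.2) (v x).2))
        = ∑ i : Fin (n + 2), ∑ k : Fin (n + 1),
          (-1:ℝ) ^ ((i:ℕ) + (k:ℕ)) * ((v (i.succAbove k)).1 *
            (fderiv ℝ (fun x1 => (γ (y.1, x1)) fun j => (v (i.succAbove (k.succAbove j))).2) y.2) (v i).2) :=
      Finset.sum_congr rfl fun x _ => Finset.sum_congr rfl fun k _ => by rw [pow_add]; ring
    have e2 : (∑ i : Fin (n + 2), ∑ k : Fin (n + 1),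
        (-1:ℝ) ^ ((i:ℕ) + (k:ℕ)) * ((v i).1 *
          (fderiv ℝ (fun x1 => (γ (y.1, x1)) fun j => (v (i.succAbove (k.succAbove j))).2) y.2)
            (v (i.succAbove k)).2))
        = ∑ x : Fin (n + 1 + 1), ∑ k : Fin (n + 1),
          (-1:ℝ) ^ (x:ℕ) * (v x).1 *
            ((-1:ℝ) ^ (k:ℕ) *
              (fderiv ℝ (fun x1 => (γ (y.1, x1)) fun j => (v (x.succAbove (k.succAbove j))).2) y.2)
                (v (x.succAbove k)).2) :=
      Finset.sum_congr rfl fun x _ => Finset.sum_congr rfl fun k _ => by rw [pow_add]; ring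
    rw [e1, hsw, ← e2]
  rw [hS1, h3, h45]
  ring
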